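/- Let G be the finite input graph of the Cumulative NDFS algorithm, v a parameter valuation, and q a state of G that does not appear on any cycle under v. Then the OuterDFS procedure backtracks from q only after every state s reachable from q with v ∈ s.⟦C⟧ either has already been backtracked from by OuterDFS or satisfies s.⟦C⟧ ⊆ Found at that moment. -/

import Mathlib

namespace PTASynth

open Relation

variable {L P : Type} {n : ℕ} [Fintype P]

/-! ### Affine expressions over parameters -/

/-- Affine expressions `z₀ + z₁p₁ + … + zₘpₘ` with integer coefficients. -/
structure AffExpr (P : Type) where
  const : ℤ
  coef : P → ℤ

noncomputable def AffExpr.eval (e : AffExpr P) (v : P → ℤ) : ℤ :=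
  e.const + ∑ p, e.coef p * v p

instance : Add (AffExpr P) :=
  ⟨fun e f => ⟨e.const + f.const, fun p => e.coef p + f.coef p⟩⟩

def AffExpr.ofInt (z : ℤ) : AffExpr P := ⟨z, fun _ => 0⟩

open Classical in
noncomputable def AffExpr.var (p : P) : AffExpr P :=
  ⟨0, fun q => if q = p then 1 else 0⟩

/-- `max_{lb,ub}(e)`: replace positively occurring parameters by their upper bound and
negatively occurring ones by their lower bound. -/
noncomputable def AffExpr.maxVal (e : AffExpr P) (lb ub : P → ℤ) : ℤ :=
  e.const + ∑ p, (if 0 ≤ e.coef p then e.coef p * ub p else e.coef p * lb p)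

/-- Extended affine expressions: `none` denotes `∞`. -/
abbrev EExpr (P : Type) := Option (AffExpr P)

noncomputable def EExpr.eval (e : EExpr P) (v : P → ℤ) : WithTop ℤ :=
  match e with
  | none => ⊤
  | some e => (AffExpr.eval e v : WithTop ℤ)

def EExpr.add : EExpr P → EExpr P → EExpr P
  | some e, some f => some (e + f)
  | _, _ => none

/-! ### Parameter constraints -/

/-- Relation symbols for parameter constraints. -/
inductive CRel | lt | le | ge | gt
deriving DecidableEq

def CRel.holds : CRel → WithTop ℤ → WithTop ℤ → Prop
  | .lt, a, b => a < b
  | .le, a, b => a ≤ b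
  | .ge, a, b => b ≤ a
  | .gt, a, b => b < a

def CRel.negRel : CRel → CRel
  | .lt => .ge
  | .le => .gt
  | .ge => .lt
  | .gt => .le

/-- A parameter constraint `e ∼ e'`. -/
structure Constr (P : Type) where
  lhs : EExpr P
  rel : CRel
  rhs : EExpr P

def Constr.neg (c : Constr P) : Constr P := ⟨c.lhs, c.rel.negRel, c.rhs⟩

def Constr.sat (c : Constr P) (v : P → ℤ) : Prop :=
  c.rel.holds (EExpr.eval c.lhs v) (EExpr.eval c.rhs v)

/-- `⟦C⟧`: the set of parameter valuations satisfying a constraint set. -/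
def csem (C : Set (Constr P)) : Set (P → ℤ) :=
  {v | ∀ c ∈ C, c.sat v}

/-- `C ⊨ c`: the constraint `c` covers the constraint set `C`. -/
def Covers (C : Set (Constr P)) (c : Constr P) : Prop :=
  ∀ v ∈ csem C, c.sat v

/-! ### Clock valuations -/

/-- Clock valuations over clocks `Fin (n+1)`, clock `0` is the zero clock `x₀`. -/
structure ClockVal (n : ℕ) where
  val : Fin (n + 1) → ℝ
  zero_eq : val 0 = 0
  nonneg : ∀ x, 0 ≤ val x

def ClockVal.zeroVal (n : ℕ) : ClockVal n := ⟨fun _ => 0, rfl, fun _ => le_refl 0⟩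

open Classical in
/-- `η⟨R⟩`: reset the clocks in `R` to `0`. -/
noncomputable def ClockVal.reset (η : ClockVal n) (R : Set (Fin (n + 1))) : ClockVal n where
  val x := if x = 0 ∨ x ∈ R then 0 else η.val x
  zero_eq := by simp
  nonneg x := by
    show 0 ≤ (if x = 0 ∨ x ∈ R then 0 else η.val x)
    split
    · exact le_rfl
    · exact η.nonneg x

/-! ### Guards -/

/-- A bound `(≺, e)` with `≺ ∈ {≤, <}` (`true` means `≤`) and `e ∈ E(P) ∪ {∞}`. -/
abbrev Bnd (P : Type) := Bool × EExpr P

def Bnd.sat (b : Bnd P) (v : P → ℤ) (r : ℝ) : Prop :=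
  match b.2 with
  | none => True
  | some e => if b.1 then r ≤ (AffExpr.eval e v : ℝ) else r < (AffExpr.eval e v : ℝ)

/-- An atomic guard `xᵢ - xⱼ ≺ e`. -/
structure Atom (n : ℕ) (P : Type) where
  i : Fin (n + 1)
  j : Fin (n + 1)
  le : Bool
  e : EExpr P

/-- A guard is a finite conjunction of atomic guards. -/
abbrev Guard (n : ℕ) (P : Type) := List (Atom n P)

def Atom.sat (a : Atom n P) (v : P → ℤ) (η : ClockVal n) : Prop :=
  Bnd.sat (a.le, a.e) v (η.val a.i - η.val a.j)

def Guard.sat (g : Guard n P) (v : P → ℤ) (η : ClockVal n) : Prop :=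
  ∀ a ∈ g, a.sat v η

/-- Simple guards: one of the compared clocks is the zero clock and the bound is finite. -/
def Atom.Simple (a : Atom n P) : Prop := (a.i = 0 ∨ a.j = 0) ∧ a.e ≠ none

def Guard.Simple (g : Guard n P) : Prop := ∀ a ∈ g, a.Simple

/-! ### Parametric timed (Büchi) automata -/

/-- A parametric timed automaton. -/
structure PTA (L : Type) (n : ℕ) (P : Type) where
  l0 : L
  trans : Set (L × Guard n P × Set (Fin (n + 1)) × L)
  Inv : L → Guard n P
  simple_trans : ∀ t ∈ trans, Guard.Simple t.2.1
  simple_Inv : ∀ l, Guard.Simple (Inv l)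

/-- A parametric timed Büchi automaton. -/
structure PTBA (L : Type) (n : ℕ) (P : Type) extends PTA L n P where
  F : Set L

/-! ### Concrete semantics `⟦A⟧_v` -/

abbrev CState (L : Type) (n : ℕ) := L × ClockVal n

/-- Delay transition `(l,η) →^d (l,η+d)`. -/
def DelayStep (M : PTA L n P) (v : P → ℤ) (s : CState L n) (d : ℝ) (s' : CState L n) : Prop :=
  s'.1 = s.1 ∧ 0 ≤ d ∧ (∀ x : Fin (n + 1), x ≠ 0 → s'.2.val x = s.2.val x + d) ∧
    Guard.sat (M.Inv s'.1) v s'.2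

/-- Action transition `(l,η) →^act (l',η⟨R⟩)`. -/
def ActStep (M : PTA L n P) (v : P → ℤ) (s s' : CState L n) : Prop :=
  ∃ g R, (s.1, g, R, s'.1) ∈ M.trans ∧ Guard.sat g v s.2 ∧
    s'.2 = s.2.reset R ∧ Guard.sat (M.Inv s'.1) v s'.2

/-- `s →^{act}_d s'`: an action transition followed by a delay transition. -/
def ActD (M : PTA L n P) (v : P → ℤ) (s s' : CState L n) : Prop :=
  ∃ s'' d, ActStep M v s s'' ∧ DelayStep M v s'' d s'

/-- `s →^{act₁,…,act_k}_d s'`: composition of `→^{act}_d` steps where each step is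
labelled by the location of its source state. -/
def ActDSeq (M : PTA L n P) (v : P → ℤ) : List L → CState L n → CState L n → Prop
  | [], s, s' => s = s'
  | l :: ls, s, s' => ∃ s'', s.1 = l ∧ ActD M v s s'' ∧ ActDSeq M v ls s'' s'

/-- `s (→^{act₁,…,act_k}_d)* s'`: one or more iterations of `→^{act₁,…,act_k}_d`. -/
def ActDSeqPlus (M : PTA L n P) (v : P → ℤ) (acts : List L) :
    CState L n → CState L n → Prop :=
  TransGen (ActDSeq M v acts)

/-! ### Time-abstracting simulations -/

def IsTASim (M : PTA L n P) (v : P → ℤ) (R : CState L n → CState L n → Prop) : Prop :=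
  (∀ s1 s2 s1', R s1 s2 → ActStep M v s1 s1' →
      ∃ s2', ActStep M v s2 s2' ∧ R s1' s2') ∧
  (∀ s1 s2 s1' (d1 : ℝ), R s1 s2 → DelayStep M v s1 d1 s1' →
      ∃ d2 s2', DelayStep M v s2 d2 s2' ∧ R s1' s2')

def IsTABisim (M : PTA L n P) (v : P → ℤ) (R : CState L n → CState L n → Prop) : Prop :=
  IsTASim M v R ∧ IsTASim M v (flip R)

/-- `s ≼ s'`: some time-abstracting simulation relates `s` to `s'`. -/
def Sim (M : PTA L n P) (v : P → ℤ) (s s' : CState L n) : Prop :=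
  ∃ R, IsTASim M v R ∧ R s s'

/-! ### Runs of `⟦A⟧_v` -/

/-- A proper run: an infinite alternating sequence of delay and action transitions,
beginning with a delay, starting in the initial state. -/
def ProperRun (A : PTBA L n P) (v : P → ℤ) (s : ℕ → CState L n) (d : ℕ → ℝ) : Prop :=
  s 0 = (A.l0, ClockVal.zeroVal n) ∧
  ∀ i, ∃ s', DelayStep A.toPTA v (s i) (d i) s' ∧ ActStep A.toPTA v s' (s (i + 1))

def AcceptingRun (A : PTBA L n P) (v : P → ℤ) (s : ℕ → CState L n) (d : ℕ → ℝ) : Prop :=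
  ProperRun A v s d ∧ ∀ N, ∃ i, N ≤ i ∧ (s i).1 ∈ A.F

/-- A run is Zeno if the sum of all its delays is finite (bounded). -/
def ZenoD (d : ℕ → ℝ) : Prop := ∃ B : ℝ, ∀ N, ∑ i ∈ Finset.range N, d i ≤ B

def HasAccRun (A : PTBA L n P) (v : P → ℤ) : Prop := ∃ s d, AcceptingRun A v s d

/-- The PTBA has no Zeno accepting runs. -/
def NoZeno (A : PTBA L n P) : Prop :=
  ∀ (v : P → ℤ) s d, AcceptingRun A v s d → ¬ ZenoD d

/-! ### (Constrained) parametric difference bound matrices -/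

/-- A parametric difference bound matrix. -/
abbrev PDBM (n : ℕ) (P : Type) := Fin (n + 1) → Fin (n + 1) → Bnd P

/-- `⟦D⟧_v`. -/
def PDBM.sem (D : PDBM n P) (v : P → ℤ) : Set (ClockVal n) :=
  {η | ∀ i j, Bnd.sat (D i j) v (η.val i - η.val j)}

/-- A constrained PDBM `(C, D)`. -/
abbrev CPDBM (n : ℕ) (P : Type) := Set (Constr P) × PDBM n P

/-- `⟦C,D⟧ = {(v,η) | v ∈ ⟦C⟧ ∧ η ∈ ⟦D⟧_v}`. -/
def CPDBM.sem (cd : CPDBM n P) : Set ((P → ℤ) × ClockVal n) :=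
  {p | p.1 ∈ csem cd.1 ∧ p.2 ∈ PDBM.sem cd.2 p.1}

open Classical in
noncomputable def PDBM.upd (D : PDBM n P) (i j : Fin (n + 1)) (b : Bnd P) : PDBM n P :=
  fun i' j' => if i' = i ∧ j' = j then b else D i' j'

/-- The constraint `e_ij (≺_ij ⟹ ≺) e` used when applying the guard atom
`x_i - x_j ≺ e` to a PDBM. -/
def atomConstr (D : PDBM n P) (a : Atom n P) : Constr P :=
  ⟨(D a.i a.j).2, if !(D a.i a.j).1 || a.le then CRel.le else CRel.lt, a.e⟩

/-- Applying a guard atom to a constrained PDBM (possibly splitting the constraint set). -/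
inductive ApplyAtom : CPDBM n P → Atom n P → CPDBM n P → Prop
  | keep (C : Set (Constr P)) (D : PDBM n P) (a : Atom n P) :
      Covers C (atomConstr D a) → ApplyAtom (C, D) a (C, D)
  | repl (C : Set (Constr P)) (D : PDBM n P) (a : Atom n P) :
      Covers C (atomConstr D a).neg →
      ApplyAtom (C, D) a (C, PDBM.upd D a.i a.j (a.le, a.e))
  | splitKeep (C : Set (Constr P)) (D : PDBM n P) (a : Atom n P) :
      ¬ Covers C (atomConstr D a) → ¬ Covers C (atomConstr D a).neg →
      ApplyAtom (C, D) a (insert (atomConstr D a) C, D)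
  | splitRepl (C : Set (Constr P)) (D : PDBM n P) (a : Atom n P) :
      ¬ Covers C (atomConstr D a) → ¬ Covers C (atomConstr D a).neg →
      ApplyAtom (C, D) a (insert (atomConstr D a).neg C, PDBM.upd D a.i a.j (a.le, a.e))

/-- Applying a conjunction of guard atoms. -/
inductive ApplyGuard : CPDBM n P → Guard n P → CPDBM n P → Prop
  | nil (cd : CPDBM n P) : ApplyGuard cd [] cd
  | cons {cd cd' cd'' : CPDBM n P} {a : Atom n P} {g : Guard n P} :
      ApplyAtom cd a cd' → ApplyGuard cd' g cd'' → ApplyGuard cd (a :: g) cd''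

open Classical in
/-- `D⟨R⟩`: resetting a set of clocks. -/
noncomputable def PDBM.reset (D : PDBM n P) (R : Set (Fin (n + 1))) : PDBM n P :=
  fun i j =>
    if i = j then D i j
    else D (if i ∈ R then 0 else i) (if j ∈ R then 0 else j)

open Classical in
/-- `D↑`: the time successor (remove all upper bounds on clocks). -/
noncomputable def PDBM.up (D : PDBM n P) : PDBM n P :=
  fun i j => if i ≠ 0 ∧ j = 0 then ((false : Bool), (none : EExpr P)) else D i j

/-- The guard atom `x_i - x_j (≺_ik ∧ ≺_kj) (e_ik + e_kj)` used by the parametric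
Floyd–Warshall canonisation. -/
def fwAtom (D : PDBM n P) (k i j : Fin (n + 1)) : Atom n P :=
  ⟨i, j, (D i k).1 && (D k j).1, EExpr.add (D i k).2 (D k j).2⟩

/-- One step of the nondeterministic parametric Floyd–Warshall algorithm. -/
inductive FWStep : ℕ × ℕ × ℕ × CPDBM n P → ℕ × ℕ × ℕ × CPDBM n P → Prop
  | relax (k i j : Fin (n + 1)) (cd cd' : CPDBM n P) :
      ApplyAtom cd (fwAtom cd.2 k i j) cd' →
      FWStep ((k : ℕ), (i : ℕ), (j : ℕ), cd) ((k : ℕ), (i : ℕ), (j : ℕ) + 1, cd')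
  | nextI (k i : Fin (n + 1)) (cd : CPDBM n P) :
      FWStep ((k : ℕ), (i : ℕ), n + 1, cd) ((k : ℕ), (i : ℕ) + 1, 0, cd)
  | nextK (k : Fin (n + 1)) (cd : CPDBM n P) :
      FWStep ((k : ℕ), n + 1, 0, cd) ((k : ℕ) + 1, 0, 0, cd)

/-- `(C',D') ∈ (C,D)_c`: membership in the canonical set. -/
def Canon (cd cd' : CPDBM n P) : Prop :=
  ReflTransGen FWStep (0, 0, 0, cd) (n + 1, 0, 0, cd')

/-! ### Symbolic semantics `⟦A⟧` -/

abbrev SymState (L : Type) (n : ℕ) (P : Type) := L × CPDBM n P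

/-- The symbolic transition relation `⟹` of `⟦A⟧`. -/
def SymStep (A : PTBA L n P) (S S' : SymState L n P) : Prop :=
  ∃ g R, (S.1, g, R, S'.1) ∈ A.trans ∧
    ∃ cd1 cd2 cd3, ApplyGuard S.2 g cd1 ∧ Canon cd1 cd2 ∧
      ApplyGuard (cd2.1, PDBM.up (PDBM.reset cd2.2 R)) (A.Inv S'.1) cd3 ∧ Canon cd3 S'.2

/-- The constraints `lb(p) ≤ p ≤ ub(p)` for all parameters `p`. -/
noncomputable def boundC (lb ub : P → ℤ) : Set (Constr P) :=
  {c | ∃ p : P, c = ⟨some (AffExpr.var p), CRel.ge, some (AffExpr.ofInt (lb p))⟩ ∨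
                c = ⟨some (AffExpr.var p), CRel.le, some (AffExpr.ofInt (ub p))⟩}

/-- The PDBM with all entries `(0, ≤)`. -/
def E0 (n : ℕ) (P : Type) : PDBM n P := fun _ _ => ((true : Bool), some (AffExpr.ofInt 0))

/-- The initial symbolic states of `⟦A⟧`. -/
def SymInit (A : PTBA L n P) (lb ub : P → ℤ) : Set (SymState L n P) :=
  {S | S.1 = A.l0 ∧ ApplyGuard (boundC lb ub, PDBM.up (E0 n P)) (A.Inv A.l0) S.2}

/-- The (reachable) symbolic states of `⟦A⟧`. -/
def SymStates (A : PTBA L n P) (lb ub : P → ℤ) : Set (SymState L n P) :=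
  {S | ∃ S0 ∈ SymInit A lb ub, ReflTransGen (SymStep A) S0 S}

/-- `s ∈_v S`: the concrete state `s` is contained in the symbolic state `S` under `v`. -/
def InV (v : P → ℤ) (s : CState L n) (S : SymState L n P) : Prop :=
  s.1 = S.1 ∧ v ∈ csem S.2.1 ∧ s.2 ∈ PDBM.sem S.2.2 v

/-! ### Abstractions -/

abbrev Abstr (L : Type) (n : ℕ) (P : Type) := SymState L n P → Set (SymState L n P)

/-- `α` is an abstraction over `⟦A⟧`. -/
def IsAbstraction (A : PTBA L n P) (α : Abstr L n P) : Prop :=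
  (∀ S Q, Q ∈ α S → Q.1 = S.1 ∧ csem Q.2.1 ⊆ csem S.2.1 ∧
      CPDBM.sem (Q.2.1, S.2.2) ⊆ CPDBM.sem Q.2) ∧
  (∀ S Q, Q ∈ α S → ∀ (v : P → ℤ) (s : CState L n), InV v s Q →
      ∃ s', InV v s' S ∧ Sim A.toPTA v s s')

/-- The transition relation `⟹^α` of the induced transition system `⟦A⟧^α`. -/
def AbsStep (A : PTBA L n P) (α : Abstr L n P) (Q Q' : SymState L n P) : Prop :=
  ∃ S, SymStep A Q S ∧ Q' ∈ α S

/-- The initial states of `⟦A⟧^α`. -/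
def AbsInit (A : PTBA L n P) (lb ub : P → ℤ) (α : Abstr L n P) : Set (SymState L n P) :=
  {Q | ∃ S ∈ SymInit A lb ub, Q ∈ α S}

/-- The states of `⟦A⟧^α`. -/
def AbsStates (A : PTBA L n P) (lb ub : P → ℤ) (α : Abstr L n P) : Set (SymState L n P) :=
  {Q | ∃ Q0 ∈ AbsInit A lb ub α, ReflTransGen (AbsStep A α) Q0 Q}

/-- The semantic content `(l, ⟦C⟧, ⟦C,D⟧)` of a symbolic state. -/
def semClass (Q : SymState L n P) : L × Set (P → ℤ) × Set ((P → ℤ) × ClockVal n) :=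
  (Q.1, csem Q.2.1, CPDBM.sem Q.2)

/-- `α` is a finite abstraction: the induced state space is finite (up to semantics). -/
def FiniteAbs (A : PTBA L n P) (lb ub : P → ℤ) (α : Abstr L n P) : Prop :=
  (semClass '' AbsStates A lb ub α).Finite

/-- There is an accepting run of `⟦A⟧^α` respecting `v`. -/
def AbsAccRun (A : PTBA L n P) (lb ub : P → ℤ) (α : Abstr L n P) (v : P → ℤ) : Prop :=
  ∃ ρ : ℕ → SymState L n P, ρ 0 ∈ AbsInit A lb ub α ∧
    (∀ i, AbsStep A α (ρ i) (ρ (i + 1))) ∧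
    (∀ i, v ∈ csem (ρ i).2.1) ∧
    (∀ N, ∃ i, N ≤ i ∧ (ρ i).1 ∈ A.F)

/-- `Q ⟹^α … ⟹^α Q'` via transitions labelled by the locations of their source states. -/
def AbsSeq (A : PTBA L n P) (α : Abstr L n P) :
    List L → SymState L n P → SymState L n P → Prop
  | [], Q, Q' => Q = Q'
  | l :: ls, Q, Q'' => ∃ Q', Q.1 = l ∧ AbsStep A α Q Q' ∧ AbsSeq A α ls Q' Q''

/-! ### The pk-extrapolation -/

def guardsOf (A : PTBA L n P) : Set (Guard n P) :=
  {g | (∃ t ∈ A.trans, t.2.1 = g) ∨ (∃ l, A.Inv l = g)}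

/-- The affine expressions compared with the clock `x` in a guard or invariant of `A`. -/
def comparedWith (A : PTBA L n P) (x : Fin (n + 1)) : Set (AffExpr P) :=
  {e | ∃ g ∈ guardsOf A, ∃ a ∈ g, (a.i = x ∨ a.j = x) ∧ a.e = some e}

/-- `M(x)`: the maximal constant with which the clock `x` is compared. -/
noncomputable def Mmax (A : PTBA L n P) (lb ub : P → ℤ) (x : Fin (n + 1)) : ℤ :=
  sSup ((fun e => AffExpr.maxVal e lb ub) '' comparedWith A x)

/-- The four possible ways the pk-extrapolation treats the entry `(i,j)` with maximal
constants `Mi = M(x_i)` and `Mj = M(x_j)`. -/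
def PkEntry (Mi Mj : ℤ) (old new : Bnd P) (c : Constr P) : Prop :=
  (new = old ∧ c = ⟨old.2, CRel.le, some (AffExpr.ofInt Mi)⟩) ∨
  (new = ((false : Bool), (none : EExpr P)) ∧ c = ⟨old.2, CRel.gt, some (AffExpr.ofInt Mi)⟩) ∨
  (new = old ∧ c = ⟨old.2, CRel.ge, some (AffExpr.ofInt (-Mj))⟩) ∨
  (new = ((false : Bool), some (AffExpr.ofInt (-Mj))) ∧
    c = ⟨old.2, CRel.lt, some (AffExpr.ofInt (-Mj))⟩)

/-- The pk-extrapolation `α_pk`. -/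
noncomputable def pkExtra (A : PTBA L n P) (lb ub : P → ℤ) : Abstr L n P :=
  fun S => {Q | Q.1 = S.1 ∧
    ∃ f : Fin (n + 1) → Fin (n + 1) → Bnd P × Constr P,
      (∀ i j, PkEntry (Mmax A lb ub i) (Mmax A lb ub j) (S.2.2 i j) (f i j).1 (f i j).2) ∧
      (∀ i j, Q.2.2 i j = (f i j).1) ∧
      Q.2.1 = S.2.1 ∪ {c | ∃ i j, c = (f i j).2}}

/-! ### Region equivalence -/

/-- The maximal constant to which the clock `x` is compared in `A|v`. -/
noncomputable def cmax (A : PTBA L n P) (v : P → ℤ) (x : Fin (n + 1)) : ℤ :=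
  sSup ((fun e => AffExpr.eval e v) '' comparedWith A x)

/-- The standard region equivalence `≡_{A|v}` on the states of `⟦A⟧_v`. -/
def RegionEquiv (A : PTBA L n P) (v : P → ℤ) (s s' : CState L n) : Prop :=
  s.1 = s'.1 ∧
  (∀ x : Fin (n + 1),
      ((cmax A v x : ℝ) < s.2.val x ∧ (cmax A v x : ℝ) < s'.2.val x) ∨
      (⌊s.2.val x⌋ = ⌊s'.2.val x⌋ ∧ (Int.fract (s.2.val x) = 0 ↔ Int.fract (s'.2.val x) = 0))) ∧
  (∀ x y : Fin (n + 1),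
      s.2.val x ≤ (cmax A v x : ℝ) → s.2.val y ≤ (cmax A v y : ℝ) →
      (Int.fract (s.2.val x) ≤ Int.fract (s.2.val y) ↔
        Int.fract (s'.2.val x) ≤ Int.fract (s'.2.val y)))

/-! ### The Cumulative NDFS algorithm -/

variable {S V : Type}

/-- A finite Büchi graph whose states carry monotone sets of parameter valuations. -/
structure NGraph (S V : Type) where
  succ : S → List S
  init : S
  acc : S → Prop
  C : S → Set V
  mono : ∀ s s', s' ∈ succ s → C s' ⊆ C s

/-- Control frames of the Cumulative NDFS machine. -/
inductive NFrame (S : Type)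
  | callOuter (s : S)
  | outer (s : S) (rest : List S)
  | outerPop (s : S)
  | callInner (s : S)
  | inner (s : S) (rest : List S)

/-- Configurations of the Cumulative NDFS machine. -/
structure NConfig (S V : Type) where
  found : Set V
  outer : Set S
  inner : Set S
  stack : Set S
  ctrl : List (NFrame S)

/-- Small-step semantics of the Cumulative NDFS algorithm. -/
inductive NStep (G : NGraph S V) : NConfig S V → NConfig S V → Prop
  | callOuter (F O I St s k) :
      NStep G ⟨F, O, I, St, .callOuter s :: k⟩
              ⟨F, insert s O, I, insert s St, .outer s (G.succ s) :: k⟩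
  | outerSkip (F O I St s s' rest k) :
      (s' ∈ O ∨ s' ∈ St ∨ G.C s' ⊆ F) →
      NStep G ⟨F, O, I, St, .outer s (s' :: rest) :: k⟩
              ⟨F, O, I, St, .outer s rest :: k⟩
  | outerRec (F O I St s s' rest k) :
      s' ∉ O → s' ∉ St → ¬ G.C s' ⊆ F →
      NStep G ⟨F, O, I, St, .outer s (s' :: rest) :: k⟩
              ⟨F, O, I, St, .callOuter s' :: .outer s rest :: k⟩
  | outerAcc (F O I St s k) :
      G.acc s → ¬ G.C s ⊆ F →
      NStep G ⟨F, O, I, St, .outer s [] :: k⟩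
              ⟨F, O, I, St, .callInner s :: .outerPop s :: k⟩
  | outerDone (F O I St s k) :
      ¬ (G.acc s ∧ ¬ G.C s ⊆ F) →
      NStep G ⟨F, O, I, St, .outer s [] :: k⟩ ⟨F, O, I, St \ {s}, k⟩
  | outerPop (F O I St s k) :
      NStep G ⟨F, O, I, St, .outerPop s :: k⟩ ⟨F, O, I, St \ {s}, k⟩
  | callInner (F O I St s k) :
      NStep G ⟨F, O, I, St, .callInner s :: k⟩
              ⟨F, O, insert s I, St, .inner s (G.succ s) :: k⟩
  | innerFound (F O I St s s' rest k) :
      s' ∈ St →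
      NStep G ⟨F, O, I, St, .inner s (s' :: rest) :: k⟩ ⟨F ∪ G.C s', O, I, St, k⟩
  | innerRec (F O I St s s' rest k) :
      s' ∉ St → s' ∉ I → ¬ G.C s' ⊆ F →
      NStep G ⟨F, O, I, St, .inner s (s' :: rest) :: k⟩
              ⟨F, O, I, St, .callInner s' :: .inner s rest :: k⟩
  | innerSkip (F O I St s s' rest k) :
      s' ∉ St → (s' ∈ I ∨ G.C s' ⊆ F) →
      NStep G ⟨F, O, I, St, .inner s (s' :: rest) :: k⟩ ⟨F, O, I, St, .inner s rest :: k⟩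
  | innerDone (F O I St s k) :
      NStep G ⟨F, O, I, St, .inner s [] :: k⟩ ⟨F, O, I, St, k⟩

/-- The initial configuration of the Cumulative NDFS algorithm. -/
def initConfig (G : NGraph S V) : NConfig S V := ⟨∅, ∅, ∅, ∅, [.callOuter G.init]⟩

/-- The edge relation of the graph. -/
def Edge (G : NGraph S V) (s s' : S) : Prop := s' ∈ G.succ s

/-- One edge of a cycle under the valuation `v`: both endpoints carry `v`. -/
def StepUnder (G : NGraph S V) (v : V) (s s' : S) : Prop :=
  s' ∈ G.succ s ∧ v ∈ G.C s ∧ v ∈ G.C s'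

/-- The step from `c` to `c'` backtracks (in `OuterDFS`) from the state `q`. -/
def Backtracks (G : NGraph S V) (q : S) (c c' : NConfig S V) : Prop :=
  NStep G c c' ∧
    ((∃ k, c.ctrl = NFrame.outer q [] :: k ∧ c'.ctrl = k) ∨
     (∃ k, c.ctrl = NFrame.outerPop q :: k))


/-! When `OuterDFS` has processed a successor `s'` of a state `u`, the state `s'` is *settled*:
already backtracked from, on the current `OuterDFS` call path, or covered by `Found`. Settledness
persists, because `Found` only grows and states leave the call path only by being backtracked
from. Hence when `OuterDFS` backtracks from `q`, every state reachable from `q` through states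
carrying `v` is backtracked from or covered, unless it lies on the call path at that moment; but
the call path leads back to `q`, so such a state would close a cycle through `q` under `v`. -/

section CumulativeNDFS

variable {G : NGraph S V} {v : V} {Done : S → Prop} {c c' : NConfig S V} {s u : S}

lemma C_subset_of_reflTransGen {a b : S} (h : ReflTransGen (Edge G) a b) : G.C b ⊆ G.C a := by
  induction h with
  | refl => exact subset_rfl
  | tail _ e ih => exact (G.mono _ _ e).trans ih

lemma transGen_stepUnder {a b : S} (h : TransGen (Edge G) a b) (hv : v ∈ G.C b) :
    TransGen (StepUnder G v) a b := by
  induction h with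
  | single e => exact .single ⟨e, G.mono _ _ e hv, hv⟩
  | tail _ e ih => exact .tail (ih (G.mono _ _ e hv)) ⟨e, G.mono _ _ e hv, hv⟩

/-- The current `OuterDFS` call path, innermost call first. Its head may be a state whose
`callOuter` frame has not yet put it on `Stack`. -/
def outerSpine : List (NFrame S) → List S
  | [] => []
  | .callOuter s :: k | .outer s _ :: k | .outerPop s :: k => s :: outerSpine k
  | .callInner _ :: k | .inner _ _ :: k => outerSpine k

def Settled (G : NGraph S V) (Done : S → Prop) (c : NConfig S V) (s : S) : Prop :=
  Done s ∨ s ∈ outerSpine c.ctrl ∨ G.C s ⊆ c.found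

def FrameOK (G : NGraph S V) (Done : S → Prop) (c : NConfig S V) : NFrame S → Prop
  | .outer u rest => rest ⊆ G.succ u ∧ ∀ s ∈ G.succ u, s ∈ rest ∨ Settled G Done c s
  | .outerPop u => ∀ s ∈ G.succ u, Settled G Done c s
  | _ => True

structure Invariant (G : NGraph S V) (Done : S → Prop) (c : NConfig S V) : Prop where
  frameOK : ∀ fr ∈ c.ctrl, FrameOK G Done c fr
  visited : ∀ s, s ∈ c.outer ∨ s ∈ c.stack → Done s ∨ s ∈ outerSpine c.ctrl
  isChain : List.IsChain (flip (Edge G)) (outerSpine c.ctrl)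

lemma NStep.found_subset (h : NStep G c c') : c.found ⊆ c'.found := by
  cases h <;> simp

lemma NStep.mem_outerSpine_or_backtracks (h : NStep G c c') (hs : s ∈ outerSpine c.ctrl) :
    s ∈ outerSpine c'.ctrl ∨ Backtracks G s c c' := by
  cases h with
  | outerDone F O I St u k hc =>
    rcases List.mem_cons.mp hs with rfl | hs
    · exact Or.inr ⟨.outerDone F O I St s k hc, Or.inl ⟨k, rfl, rfl⟩⟩
    · exact Or.inl hs
  | outerPop F O I St u k =>
    rcases List.mem_cons.mp hs with rfl | hs
    · exact Or.inr ⟨.outerPop F O I St s k, Or.inr ⟨k, rfl⟩⟩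
    · exact Or.inl hs
  | _ => left; simp_all [outerSpine]

lemma NStep.visited_or_mem_outerSpine (h : NStep G c c') (hs : s ∈ c'.outer ∨ s ∈ c'.stack) :
    (s ∈ c.outer ∨ s ∈ c.stack) ∨ s ∈ outerSpine c'.ctrl := by
  cases h <;> simp_all [outerSpine] <;> tauto

def DoneAfter (G : NGraph S V) (Done : S → Prop) (c c' : NConfig S V) (s : S) : Prop :=
  Done s ∨ Backtracks G s c c'

lemma Settled.step (h : NStep G c c') (hs : Settled G Done c s) :
    Settled G (DoneAfter G Done c c') c' s := by
  rcases hs with hd | hsp | hF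
  · exact Or.inl (Or.inl hd)
  · exact (h.mem_outerSpine_or_backtracks hsp).elim (Or.inr ∘ Or.inl) (Or.inl ∘ Or.inr)
  · exact Or.inr (Or.inr (hF.trans h.found_subset))

lemma FrameOK.step (h : NStep G c c') {fr : NFrame S} (hfr : FrameOK G Done c fr) :
    FrameOK G (DoneAfter G Done c c') c' fr := by
  cases fr with
  | outer u rest => exact ⟨hfr.1, fun s hs => (hfr.2 s hs).imp_right (Settled.step h)⟩
  | outerPop u => exact fun s hs => (hfr s hs).step h
  | _ => trivial

lemma FrameOK.outer_tail {rest : List S} (hfr : FrameOK G Done c (.outer u (s :: rest)))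
    (hs : Settled G Done c s) : FrameOK G Done c (.outer u rest) :=
  ⟨(List.cons_subset.mp hfr.1).2, fun t ht => by
    rcases hfr.2 t ht with ht | ht
    · rcases List.mem_cons.mp ht with rfl | ht
      exacts [Or.inr hs, Or.inl ht]
    · exact Or.inr ht⟩

lemma FrameOK.outerPop (hfr : FrameOK G Done c (.outer u [])) :
    FrameOK G Done c (.outerPop u) :=
  fun s hs => (hfr.2 s hs).resolve_left List.not_mem_nil

lemma Invariant.frameOK_step (hI : Invariant G Done c) (h : NStep G c c') :
    ∀ fr ∈ c'.ctrl, FrameOK G (DoneAfter G Done c c') c' fr := by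
  have hk : ∀ fr ∈ c.ctrl, FrameOK G (DoneAfter G Done c c') c' fr :=
    fun fr hfr => (hI.frameOK fr hfr).step h
  have hset : ∀ s, Settled G Done c s → Settled G (DoneAfter G Done c c') c' s :=
    fun s => Settled.step h
  cases h with
  | callOuter =>
    simp only [List.forall_mem_cons] at hk ⊢
    exact ⟨⟨List.Subset.refl _, fun t ht => .inl ht⟩, hk.2⟩
  | outerSkip F O I St u s' rest k hc =>
    simp only [List.forall_mem_cons] at hk ⊢
    refine ⟨hk.1.outer_tail (hset s' ?_), hk.2⟩
    rcases hc with hc | hc | hc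
    · exact (hI.visited s' (.inl hc)).imp_right Or.inl
    · exact (hI.visited s' (.inr hc)).imp_right Or.inl
    · exact Or.inr (Or.inr hc)
  | outerRec =>
    simp only [List.forall_mem_cons] at hk ⊢
    exact ⟨trivial, hk.1.outer_tail (Or.inr (Or.inl (by simp [outerSpine]))), hk.2⟩
  | outerAcc =>
    simp only [List.forall_mem_cons] at hk ⊢
    exact ⟨trivial, hk.1.outerPop, hk.2⟩
  | callInner | innerSkip =>
    simp only [List.forall_mem_cons] at hk ⊢
    exact ⟨trivial, hk.2⟩
  | innerRec =>
    simp only [List.forall_mem_cons] at hk ⊢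
    exact ⟨trivial, trivial, hk.2⟩
  | outerDone | outerPop | innerFound | innerDone => exact fun fr hfr => hk fr (.tail _ hfr)

lemma Invariant.isChain_step (hI : Invariant G Done c) (h : NStep G c c') :
    List.IsChain (flip (Edge G)) (outerSpine c'.ctrl) := by
  have hc := hI.isChain
  cases h with
  | outerRec F O I St u s' rest k =>
    have hrest := (hI.frameOK _ List.mem_cons_self).1
    simp only [outerSpine] at hc ⊢
    exact List.IsChain.cons_cons (hrest List.mem_cons_self) hc
  | outerDone | outerPop => exact hc.tail
  | _ => simpa [outerSpine] using hc

lemma Invariant.step (hI : Invariant G Done c) (h : NStep G c c') :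
    Invariant G (DoneAfter G Done c c') c' where
  frameOK := hI.frameOK_step h
  visited s hs := by
    rcases h.visited_or_mem_outerSpine hs with hs | hs
    · rcases hI.visited s hs with hd | hsp
      · exact Or.inl (Or.inl hd)
      · exact (h.mem_outerSpine_or_backtracks hsp).elim Or.inr (Or.inl ∘ Or.inr)
    · exact Or.inr hs
  isChain := hI.isChain_step h

lemma invariant_init (G : NGraph S V) (Done : S → Prop) : Invariant G Done (initConfig G) where
  frameOK := by simp [initConfig, FrameOK]
  visited := by simp [initConfig]
  isChain := by simp [initConfig, outerSpine]

lemma Invariant.settled_of_backtracks (hI : Invariant G Done c) (hb : Backtracks G u c c') :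
    ∀ s ∈ G.succ u, Settled G Done c s := by
  rcases hb.2 with ⟨k, hk, -⟩ | ⟨k, hk⟩
  · exact FrameOK.outerPop (hI.frameOK _ (hk ▸ List.mem_cons_self))
  · exact hI.frameOK _ (hk ▸ List.mem_cons_self)

lemma Invariant.reflTransGen_of_backtracks (hI : Invariant G Done c) (hb : Backtracks G u c c')
    (hs : s ∈ outerSpine c.ctrl) : ReflTransGen (Edge G) s u := by
  have hspine : ∃ l, outerSpine c.ctrl = u :: l := by
    rcases hb.2 with ⟨k, hk, -⟩ | ⟨k, hk⟩
    all_goals exact ⟨outerSpine k, by simp [hk, outerSpine]⟩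
  obtain ⟨l, hl⟩ := hspine
  have hc := hI.isChain
  rw [hl] at hs hc
  exact hc.induction (ReflTransGen (Edge G) · u) _ (fun _ _ e h => h.head e) (fun _ => .refl)
    s hs

variable {f : ℕ → NConfig S V} {m : ℕ}

def DoneBefore (G : NGraph S V) (f : ℕ → NConfig S V) (i : ℕ) (s : S) : Prop :=
  ∃ j, j < i ∧ Backtracks G s (f j) (f (j + 1))

lemma doneBefore_succ (i : ℕ) : DoneBefore G f (i + 1) =
    DoneAfter G (DoneBefore G f i) (f i) (f (i + 1)) := by
  funext s
  exact propext Nat.exists_lt_succ_right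

lemma invariant_run (h0 : f 0 = initConfig G)
    (hsteps : ∀ i, i ≤ m → NStep G (f i) (f (i + 1))) {i : ℕ} (hi : i ≤ m + 1) :
    Invariant G (DoneBefore G f i) (f i) := by
  induction i with
  | zero => rw [h0]; exact invariant_init G _
  | succ i ih => rw [doneBefore_succ]; exact (ih (by omega)).step (hsteps i (by omega))

lemma settled_run (hsteps : ∀ i, i ≤ m → NStep G (f i) (f (i + 1))) {i j : ℕ}
    (hij : i ≤ j) (hj : j ≤ m + 1) (hs : Settled G (DoneBefore G f i) (f i) s) :
    Settled G (DoneBefore G f j) (f j) s := by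
  induction j, hij using Nat.le_induction with
  | base => exact hs
  | succ j _ ih => rw [doneBefore_succ]; exact (ih (by omega)).step (hsteps j (by omega))

end CumulativeNDFS

/-- If `q` does not appear on any cycle under `v`, then `OuterDFS`
backtracks from `q` only after every state `s` reachable from `q` with `v ∈ s.⟦C⟧`
has already been backtracked from or satisfies `s.⟦C⟧ ⊆ Found`. -/
theorem backtrack_order_of_noncyclic_states
    (G : NGraph S V) (v : V) (q : S)
    (hq : ¬ TransGen (StepUnder G v) q q)
    (f : ℕ → NConfig S V) (m : ℕ) (h0 : f 0 = initConfig G)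
    (hsteps : ∀ i, i ≤ m → NStep G (f i) (f (i + 1)))
    (hback : Backtracks G q (f m) (f (m + 1))) :
    ∀ s : S, TransGen (Edge G) q s → v ∈ G.C s →
      (∃ j, j < m ∧ Backtracks G s (f j) (f (j + 1))) ∨ G.C s ⊆ (f m).found := by
  have hsettled : ∀ u j, j ≤ m → Backtracks G u (f j) (f (j + 1)) → ∀ t ∈ G.succ u,
      Settled G (DoneBefore G f m) (f m) t := fun u j hj hb t ht =>
    settled_run hsteps hj (by omega)
      ((invariant_run h0 hsteps (by omega)).settled_of_backtracks hb t ht)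
  have off_spine :
      ∀ t, TransGen (Edge G) q t → v ∈ G.C t → t ∉ outerSpine (f m).ctrl := by
    intro t hqt hvt ht
    have htq := (invariant_run h0 hsteps (by omega)).reflTransGen_of_backtracks hback ht
    exact hq (transGen_stepUnder (hqt.trans_left htq)
      (C_subset_of_reflTransGen hqt.to_reflTransGen hvt))
  have done_or_covered : ∀ t, TransGen (Edge G) q t → v ∈ G.C t →
      Settled G (DoneBefore G f m) (f m) t → DoneBefore G f m t ∨ G.C t ⊆ (f m).found :=
    fun t hqt hvt ht => ht.imp_right (Or.resolve_left · (off_spine t hqt hvt))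
  intro s hqs
  induction hqs with
  | single e => exact fun hv => done_or_covered _ (.single e) hv (hsettled q m le_rfl hback _ e)
  | @tail u t hqu e ih =>
    intro hv
    rcases ih (G.mono u t e hv) with ⟨j, hj, hb⟩ | hu
    · exact done_or_covered t (hqu.tail e) hv (hsettled u j hj.le hb t e)
    · exact Or.inr ((G.mono u t e).trans hu)

end PTASynth
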